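/- arXiv:2505.00330 — 4 statements merged into one kernel-verified Lean document; each statement's English description precedes it below -/
import Mathlib

section
/- Fix $y_0 \in \mathbb{Q}^*$ with $y_0 \neq 1$, and define $\bar h_m, \bar k_m \in \mathbb{Q}[T]$ by $\bar h_0 = 1-y_0$, $\bar k_0 = 1$, $\bar h_{m+1} = \bar h_m - T \bar k_m$, $\bar k_{m+1} = \bar h_m + (1-T) \bar k_m$. Then for every $m \geq 1$, the polynomials $\bar h_m$ and $T \cdot \bar k_m$ have no common root in $\mathbb{C}$ (equivalently, are coprime in $\mathbb{C}[T]$). -/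
theorem stmt_6
    (y0 : ℚ) (hy0 : y0 ≠ 0) (hy0' : y0 ≠ 1)
    (h k : ℕ → Polynomial ℚ)
    (hh0 : h 0 = Polynomial.C (1 - y0)) (hk0 : k 0 = 1)
    (hh : ∀ m, h (m + 1) = h m - Polynomial.X * k m)
    (hk : ∀ m, k (m + 1) = h m + (1 - Polynomial.X) * k m) :
    ∀ m : ℕ, 1 ≤ m → ∀ z : ℂ,
      ¬ (Polynomial.aeval z (h m) = 0 ∧ Polynomial.aeval z (Polynomial.X * k m) = 0) := by
  have key : ∀ m : ℕ, ∀ z : ℂ,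
      ¬ (Polynomial.aeval z (h m) = 0 ∧ Polynomial.aeval z (Polynomial.X * k m) = 0) := by
    intro m
    induction m with
    | zero =>
      rintro z ⟨h1, _⟩
      rw [hh0] at h1
      simp only [Polynomial.aeval_C] at h1
      have h1' : (1 - y0 : ℚ) = 0 :=
        (map_eq_zero_iff _ (algebraMap ℚ ℂ).injective).mp h1
      exact hy0' (by linarith)
    | succ m ih =>
      rintro z ⟨h1, h2⟩
      rw [hh m] at h1
      rw [hk m] at h2
      simp only [map_sub, map_add, map_mul, map_one, Polynomial.aeval_X] at h1 h2
      apply ih z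
      constructor
      · linear_combination h1 + h2 - z * h1
      · simp only [map_mul, Polynomial.aeval_X]
        linear_combination h2 - z * h1
  exact fun m _ => key m
end

section
/- Fix $y_0 \in \mathbb{Q}^* \setminus \{1\}$ and $m \geq 1$, and consider $\rho_m(Z, T) := (Z - y_0)\bar h_m(T) + y_0 T \bar k_m(T)$ as a polynomial in $T$ over the field $\mathbb{Q}(Z)$. Then every irreducible factor of $\rho_m$ in $\mathbb{Q}(Z)[T]$ has degree at least $2$ in $T$. -/
/-!
Since `h (m + 1) = h m - T * k m`, we have `ρ m = Z * h m - y0 * h (m + 1)`, which is linear in `Z`.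
Its two coefficients are coprime: the Bezout relation between `h m` and `k m` propagates along the
recurrence, and `(h m)(0) = 1 - y0 ≠ 0` makes `h m` prime to `T`. So `ρ m` is irreducible in
`ℚ[Z][T]` and, being primitive, also in `ℚ(Z)[T]` by Gauss's lemma. Every irreducible factor of
`ρ m` is therefore an associate of it, and its `T`-degree is `m + 1 ≥ 2`.
-/

open Polynomial

namespace Polynomial

variable {K : Type*} [Field K]

theorem irreducible_C_X_mul_map_C_sub_map_C {f g : K[X]} (hfg : IsCoprime f g) (hf : f ≠ 0) :
    Irreducible (C X * f.map C - g.map C) := by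
  have hswap : Bivariate.swap (C X * f.map C - g.map C) = C f * X + C (-g) := by
    simp only [map_sub, map_mul, Bivariate.swap_X, Bivariate.swap_map_C, map_neg]
    ring
  rw [← MulEquiv.irreducible_iff (Bivariate.swap (R := K)), hswap]
  exact irreducible_C_mul_X_add_C hf hfg.neg_right.isRelPrime

theorem natDegree_C_X_mul_map_C_sub_map_C_ne_zero {f g : K[X]} (hg : g.natDegree ≠ 0) :
    (C X * f.map C - g.map C).natDegree ≠ 0 := by
  refine ne_of_gt ((Nat.pos_of_ne_zero hg).trans_le (le_natDegree_of_ne_zero fun h0 => ?_))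
  have hcoeff := congrArg (coeff · 0) h0
  simp only [coeff_sub, coeff_C_mul, coeff_map, mul_coeff_zero, coeff_X_zero, zero_mul,
    coeff_C_zero, zero_sub, coeff_zero, neg_eq_zero] at hcoeff
  exact hg (by simp [leadingCoeff_eq_zero.mp hcoeff])

theorem irreducible_C_ratFuncX_mul_map_sub_map {f g : K[X]} (hfg : IsCoprime f g)
    (hg : g.natDegree ≠ 0) :
    Irreducible (C RatFunc.X * f.map RatFunc.C - g.map RatFunc.C) := by
  have hf : f ≠ 0 := by
    rintro rfl
    exact hg (natDegree_eq_zero_of_isUnit (isCoprime_zero_left.mp hfg))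
  have hirr := irreducible_C_X_mul_map_C_sub_map_C hfg hf
  have hmap : (C X * f.map C - g.map C).map (algebraMap K[X] (RatFunc K)) =
      C RatFunc.X * f.map RatFunc.C - g.map RatFunc.C := by
    simp [Polynomial.map_map, RatFunc.algebraMap_comp_C, RatFunc.algebraMap_X]
  have hprim := hirr.isPrimitive (natDegree_C_X_mul_map_C_sub_map_C_ne_zero hg)
  rwa [← hmap, ← hprim.irreducible_iff_irreducible_map_fraction_map]

theorem natDegree_C_ratFuncX_mul_map_sub_map {f g : K[X]} (hfg : f.natDegree < g.natDegree) :
    (C RatFunc.X * f.map RatFunc.C - g.map RatFunc.C).natDegree = g.natDegree := by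
  rw [natDegree_sub_eq_right_of_natDegree_lt] <;> rw [natDegree_map]
  exact (natDegree_C_mul_le _ _).trans_lt (by rwa [natDegree_map])

end Polynomial

namespace HKRecurrence

variable {K : Type*} [Field K] {h k : ℕ → K[X]}

theorem isCoprime (hh : ∀ m, h (m + 1) = h m - X * k m)
    (hk : ∀ m, k (m + 1) = h m + (1 - X) * k m) (h0 : IsCoprime (h 0) (k 0)) (m : ℕ) :
    IsCoprime (h m) (k m) := by
  induction m with
  | zero => exact h0
  | succ m ih =>
    obtain ⟨a, b, hab⟩ := ih
    exact ⟨a * (1 - X) - b, a * X + b, by rw [hh, hk]; linear_combination hab⟩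

theorem coeff_zero (hh : ∀ m, h (m + 1) = h m - X * k m) (m : ℕ) :
    (h m).coeff 0 = (h 0).coeff 0 := by
  induction m with
  | zero => rfl
  | succ m ih => simp [hh, ih]

theorem isCoprime_succ (hh : ∀ m, h (m + 1) = h m - X * k m)
    (hk : ∀ m, k (m + 1) = h m + (1 - X) * k m) (h0 : IsCoprime (h 0) (k 0))
    (hc : (h 0).coeff 0 ≠ 0) (m : ℕ) : IsCoprime (h m) (h (m + 1)) := by
  have hX : IsCoprime X (h m) := by
    rw [irreducible_X.coprime_iff_not_dvd, X_dvd_iff, coeff_zero hh]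
    exact hc
  have hsucc : h (m + 1) = -(X * k m) + h m * 1 := by rw [hh]; ring
  rw [hsucc, IsCoprime.add_mul_left_right_iff, IsCoprime.neg_right_iff]
  exact hX.symm.mul_right (isCoprime hh hk h0 m)

theorem natDegree_le_and_coeff (hh : ∀ m, h (m + 1) = h m - X * k m)
    (hk : ∀ m, k (m + 1) = h m + (1 - X) * k m) (h0 : (h 0).natDegree = 0) (k0 : k 0 = 1)
    (m : ℕ) : (h m).natDegree ≤ m ∧ (k m).natDegree ≤ m ∧ (k m).coeff m = (-1) ^ m := by
  induction m with
  | zero => simp [h0, k0]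
  | succ m ih =>
    obtain ⟨hdeg, kdeg, kcoeff⟩ := ih
    refine ⟨?_, ?_, ?_⟩
    · rw [hh]
      exact (natDegree_sub_le _ _).trans
        (max_le (by omega) ((natDegree_mul_le_of_le natDegree_X_le kdeg).trans (by omega)))
    · have h1X : (1 - X : K[X]).natDegree ≤ 1 :=
        (natDegree_sub_le _ _).trans (max_le (by simp) natDegree_X_le)
      rw [hk]
      exact natDegree_add_le_of_degree_le (by omega)
        ((natDegree_mul_le_of_le h1X kdeg).trans (by omega))
    · rw [hk, coeff_add, sub_mul, one_mul, coeff_sub, coeff_X_mul, kcoeff,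
        coeff_eq_zero_of_natDegree_lt (by omega), coeff_eq_zero_of_natDegree_lt (by omega)]
      ring

theorem natDegree_succ (hh : ∀ m, h (m + 1) = h m - X * k m)
    (hk : ∀ m, k (m + 1) = h m + (1 - X) * k m) (h0 : (h 0).natDegree = 0) (k0 : k 0 = 1)
    (m : ℕ) : (h (m + 1)).natDegree = m + 1 := by
  obtain ⟨hdeg, -, kcoeff⟩ := natDegree_le_and_coeff hh hk h0 k0 m
  refine natDegree_eq_of_le_of_coeff_ne_zero (natDegree_le_and_coeff hh hk h0 k0 (m + 1)).1 ?_
  rw [hh, coeff_sub, coeff_X_mul, kcoeff, coeff_eq_zero_of_natDegree_lt (by omega), zero_sub]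
  exact neg_ne_zero.mpr (pow_ne_zero _ (neg_ne_zero.mpr one_ne_zero))

end HKRecurrence

theorem stmt_15
    (y0 : ℚ) (hy0 : y0 ≠ 0) (hy0' : y0 ≠ 1)
    (h k : ℕ → Polynomial ℚ)
    (hh0 : h 0 = Polynomial.C (1 - y0)) (hk0 : k 0 = 1)
    (hh : ∀ m, h (m + 1) = h m - Polynomial.X * k m)
    (hk : ∀ m, k (m + 1) = h m + (1 - Polynomial.X) * k m)
    (ρ : ℕ → Polynomial (RatFunc ℚ))
    (hρ : ∀ m, ρ m = Polynomial.C (RatFunc.X - RatFunc.C y0)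
        * Polynomial.map (RatFunc.C : ℚ →+* RatFunc ℚ) (h m)
      + Polynomial.C (RatFunc.C y0) * Polynomial.X
        * Polynomial.map (RatFunc.C : ℚ →+* RatFunc ℚ) (k m)) :
    ∀ m : ℕ, 1 ≤ m → ∀ p : Polynomial (RatFunc ℚ),
      Irreducible p → p ∣ ρ m → 2 ≤ p.natDegree := by
  intro m hm p hp hdvd
  have hρ' : ρ m = C RatFunc.X * (h m).map RatFunc.C - (C y0 * h (m + 1)).map RatFunc.C := by
    rw [hρ, hh]
    simp only [Polynomial.map_mul, Polynomial.map_sub, map_C, map_X, map_sub]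
    ring
  have h0 : (h 0).natDegree = 0 := by simp [hh0]
  have hdeg_le : (h m).natDegree ≤ m := (HKRecurrence.natDegree_le_and_coeff hh hk h0 hk0 m).1
  have hdeg_succ : (C y0 * h (m + 1)).natDegree = m + 1 := by
    rw [natDegree_C_mul hy0, HKRecurrence.natDegree_succ hh hk h0 hk0]
  have hcop : IsCoprime (h m) (C y0 * h (m + 1)) := by
    rw [isCoprime_mul_unit_left_right (isUnit_C.mpr hy0.isUnit)]
    exact HKRecurrence.isCoprime_succ hh hk (by rw [hk0]; exact isCoprime_one_right)
      (by simp [hh0, sub_eq_zero, Ne.symm hy0']) m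
  have hirr : Irreducible (ρ m) := by
    rw [hρ']
    exact irreducible_C_ratFuncX_mul_map_sub_map hcop (by omega)
  have hdeg : (ρ m).natDegree = m + 1 := by
    rw [hρ', natDegree_C_ratFuncX_mul_map_sub_map (by omega), hdeg_succ]
  rw [natDegree_eq_of_degree_eq (degree_eq_degree_of_associated (hp.associated_of_dvd hirr hdvd)),
    hdeg]
  omega
end

section
/- Fix $y_0 \in \mathbb{Q}^* \setminus \{1\}$ and $m \geq 1$. Then there exist infinitely many $Z_0 \in \mathbb{Q}^*$ such that (i) $y_0 \neq Z_0^n$ for every $n \in \mathbb{Z}$, and (ii) the polynomial $(Z_0 - y_0)\bar h_m(T) + y_0 T \bar k_m(T) \in \mathbb{Q}[T]$ has no root in $\mathbb{Q}$. -/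
/-!
Since `X * k m = h m - h (m + 1)`, the polynomial is `Z₀ h_m - y₀ h_{m+1}`, where `h_m` and
`h_{m+1}` are coprime of degrees `m < m + 1`. For coprime `F, G ∈ ℚ[X]` with
`0 < deg F < deg G`, clear denominators to `A, B ∈ ℤ[X]` and take a prime `p` exceeding the
resultant of `A, B` and the leading coefficient of `B` such that `A` has a root modulo `p`
(Schur). Then `s ↦ B(s) / A(s)` is defined at fewer than `p` residues, so it misses some `z`.
If `Z ≡ z (mod p)` and `Z A(t) = B(t)` with `t ∈ ℚ`, the rational root theorem makes `t` a
`p`-adic integer, and reducing modulo `p` gives `z A(s) = B(s)`: impossible if `A(s) ≠ 0` by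
the choice of `z`, and if `A(s) = 0` because `p` would divide the resultant. Large integers
`Z ≡ z (mod p)` moreover satisfy `y₀ ≠ Z ^ n` for all `n ∈ ℤ`.
-/

open Polynomial

theorem Polynomial.exists_eval_notMem_of_natDegree_pos {R : Type*} [CommRing R] [IsDomain R]
    [Infinite R] {P : R[X]} (hP : 0 < P.natDegree) (S : Finset R) : ∃ t, P.eval t ∉ S := by
  have hfin : {t | P.eval t ∈ S}.Finite := by
    refine (S.finite_toSet.biUnion fun s _ => finite_setOfPred_isRoot (p := P - C s) ?_).subset ?_
    · rw [sub_ne_zero]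
      rintro rfl
      simp at hP
    · intro t ht
      simpa [sub_eq_zero] using ht
  exact hfin.exists_notMem

theorem Polynomial.degree_sub_X_mul_eq {R : Type*} [Ring R] [Nontrivial R] {p q : R[X]} {n : ℕ}
    (hp : p.degree ≤ n) (hq : q.degree = n) : (p - X * q).degree = ((n + 1 : ℕ) : WithBot ℕ) := by
  have hXq : (X * q).degree = ((n + 1 : ℕ) : WithBot ℕ) := by rw [X_mul, degree_mul_X, hq]; rfl
  rw [degree_sub_eq_right_of_degree_lt (hp.trans_lt ?_), hXq]
  rw [hXq]
  exact_mod_cast n.lt_succ_self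

theorem Polynomial.exists_prime_gt_dvd_eval {P : ℤ[X]} (hP : 0 < P.natDegree) (N : ℕ) :
    ∃ p, p.Prime ∧ N < p ∧ ∃ s : ℤ, (p : ℤ) ∣ P.eval s := by
  set c := P.eval 0
  by_cases hc : c = 0
  · obtain ⟨p, hNp, hp⟩ := Nat.exists_infinite_primes (N + 1)
    exact ⟨p, hp, hNp, 0, by rw [show P.eval 0 = 0 from hc]; exact dvd_zero _⟩
  set M := c * N.factorial
  have hM : M ≠ 0 := mul_ne_zero hc (by positivity)
  have hPM : 0 < (P.comp (C M * X)).natDegree := by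
    rwa [natDegree_comp, natDegree_C_mul_X _ hM, mul_one]
  obtain ⟨t, ht⟩ := exists_eval_notMem_of_natDegree_pos hPM {c, -c}
  -- `P (M t) ≡ P 0 = c (mod c N!)`, so `P (M t) = c w` with `w ≡ 1 (mod N!)`: the prime factors
  -- of `w` exceed `N`, and `w ≠ ±1` by the choice of `t`.
  obtain ⟨e, he⟩ : M * t ∣ P.eval (M * t) - c := by simpa using sub_dvd_eval_sub (M * t) 0 P
  set w := 1 + N.factorial * (t * e)
  have hPw : P.eval (M * t) = c * w := by linear_combination he
  have hw : w.natAbs ≠ 1 := by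
    intro h1
    rcases Int.natAbs_eq_iff.1 h1 with hw | hw <;> simp [eval_comp, hPw, hw] at ht
  have hp := Nat.minFac_prime hw
  have hpw : (w.natAbs.minFac : ℤ) ∣ w := Int.ofNat_dvd_left.2 (Nat.minFac_dvd _)
  refine ⟨_, hp, ?_, M * t, hPw ▸ hpw.mul_left c⟩
  by_contra! hpN
  have hpN' : (w.natAbs.minFac : ℤ) ∣ N.factorial * (t * e) :=
    (Int.natCast_dvd_natCast.2 (Nat.dvd_factorial hp.pos hpN)).mul_right _
  exact hp.not_dvd_one (Int.natCast_dvd_natCast.1 ((dvd_add_left hpN').1 hpw))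

theorem exists_forall_mul_ne_of_eq_zero {K : Type*} [Field K] [Finite K] (f g : K → K) {s₀ : K}
    (hs₀ : f s₀ = 0) : ∃ z, ∀ s, f s ≠ 0 → z * f s ≠ g s := by
  have hns : ¬ Function.Surjective fun s : {s // f s ≠ 0} => g s / f s := fun hsurj =>
    (Finite.card_subtype_lt (p := fun s => f s ≠ 0) (not_not.2 hs₀)).not_ge
      (Nat.card_le_card_of_surjective _ hsurj)
  obtain ⟨z, hz⟩ := not_forall.1 hns
  refine ⟨z, fun s hs hzs => hz ⟨⟨s, hs⟩, ?_⟩⟩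
  simp only [← hzs, mul_div_cancel_right₀ _ hs]

theorem exists_aeval_zmod_eq_zero_of_aeval_rat_eq_zero {p : ℕ} [Fact p.Prime] {P : ℤ[X]} {t : ℚ}
    (ht : aeval t P = 0) (hp : ¬ p ∣ t.den) : ∃ s : ZMod p, aeval s P = 0 := by
  let t' : ℤ_[p] := ⟨t, Padic.norm_rat_le_one hp⟩
  have ht' : aeval t' P = 0 := by
    have h1 : (aeval t' P : ℚ_[p]) = aeval (t : ℚ_[p]) P :=
      (aeval_algHom_apply PadicInt.Coe.ringHom.toIntAlgHom t' P).symm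
    have h2 : aeval (t : ℚ_[p]) P = aeval t P :=
      aeval_algHom_apply (Rat.castHom ℚ_[p]).toIntAlgHom t P
    rw [← PadicInt.coe_eq_zero, h1, h2, ht, Rat.cast_zero]
  exact ⟨PadicInt.toZMod t', by rw [← RingHom.toIntAlgHom_apply, aeval_algHom_apply]; simp [ht']⟩

theorem Rat.den_dvd_leadingCoeff_of_aeval_eq_zero {P : ℤ[X]} {t : ℚ} (ht : aeval t P = 0) :
    (t.den : ℤ) ∣ P.leadingCoeff :=
  t.associated_num_den.2.dvd_iff_dvd_left.1 (den_dvd_of_is_root ht)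

theorem zpow_ne_of_abs_lt {K : Type*} [Field K] [LinearOrder K] [IsStrictOrderedRing K] {y Z : K}
    (hy₀ : y ≠ 0) (hy₁ : y ≠ 1) (hyZ : |y| < |Z|) (hyZ' : |y|⁻¹ < |Z|) (n : ℤ) : Z ^ n ≠ y := by
  have hy : 0 < |y| := abs_pos.2 hy₀
  have hZ : 1 < |Z| := by
    by_contra! hZ
    have := (one_lt_inv₀ hy).2 (hyZ.trans_le hZ)
    linarith
  rintro rfl
  have h1 : |Z| ^ (-1 : ℤ) < |Z| ^ n := by
    rw [zpow_neg_one, ← abs_zpow]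
    exact inv_lt_of_inv_lt₀ hy hyZ'
  have h2 : |Z| ^ n < |Z| ^ (1 : ℤ) := by rwa [zpow_one, ← abs_zpow]
  rw [zpow_lt_zpow_iff_right₀ hZ] at h1 h2
  obtain rfl : n = 0 := by omega
  exact hy₁ (zpow_zero Z)

theorem ZMod.exists_intCast_eq_gt {K : Type*} [Field K] [LinearOrder K] [IsStrictOrderedRing K]
    [Archimedean K] {p : ℕ} [NeZero p] (z : ZMod p) (R : K) :
    ∃ Z : ℤ, (Z : ZMod p) = z ∧ R < Z := by
  obtain ⟨n, hn⟩ := exists_nat_gt R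
  refine ⟨z.val + p * n, by simp, hn.trans_le ?_⟩
  have hp : (1 : K) ≤ p := by exact_mod_cast NeZero.one_le
  push_cast
  nlinarith [(n.cast_nonneg : (0 : K) ≤ n), (z.val.cast_nonneg : (0 : K) ≤ z.val)]

theorem exists_prime_forall_intCast_eq_aeval_ne_zero {A B : ℤ[X]}
    (hcop : IsCoprime (A.map (Int.castRingHom ℚ)) (B.map (Int.castRingHom ℚ)))
    (hA : 0 < A.natDegree) (hAB : A.natDegree < B.natDegree) :
    ∃ p, p.Prime ∧ ∃ z : ZMod p, ∀ Z : ℤ, (Z : ZMod p) = z →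
      ∀ t : ℚ, aeval t (C Z * A - B) ≠ 0 := by
  have hres : resultant A B ≠ 0 := by
    intro h
    apply resultant_ne_zero _ _ hcop
    rw [natDegree_map_eq_of_injective (RingHom.injective_int _),
      natDegree_map_eq_of_injective (RingHom.injective_int _), resultant_map_map, h, map_zero]
  have hB : B.leadingCoeff ≠ 0 := leadingCoeff_ne_zero.2 (ne_zero_of_natDegree_gt hAB)
  obtain ⟨U, V, -, -, hUV⟩ := exists_mul_add_mul_eq_C_resultant A B le_rfl le_rfl (.inl hA.ne')
  obtain ⟨p, hp, hpN, s₀, hs₀⟩ :=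
    exists_prime_gt_dvd_eval hA (resultant A B * B.leadingCoeff).natAbs
  have : Fact p.Prime := ⟨hp⟩
  have hpr : ¬ (p : ℤ) ∣ resultant A B * B.leadingCoeff := fun hdvd =>
    mul_ne_zero hres hB (Int.eq_zero_of_dvd_of_natAbs_lt_natAbs hdvd (by simpa))
  obtain ⟨z, hz⟩ := exists_forall_mul_ne_of_eq_zero (fun s : ZMod p => aeval s A)
    (fun s => aeval s B) (s₀ := s₀) (by simpa [aeval_def, ZMod.intCast_zmod_eq_zero_iff_dvd])
  refine ⟨p, hp, z, fun Z hZ t ht => ?_⟩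
  have hden : ¬ p ∣ t.den := by
    intro hdvd
    have hlc := Rat.den_dvd_leadingCoeff_of_aeval_eq_zero ht
    rw [leadingCoeff_sub_of_degree_lt' (degree_lt_degree ((natDegree_C_mul_le _ _).trans_lt hAB)),
      dvd_neg] at hlc
    exact hpr (((Int.natCast_dvd_natCast.2 hdvd).trans hlc).mul_left _)
  obtain ⟨s, hs⟩ := exists_aeval_zmod_eq_zero_of_aeval_rat_eq_zero ht hden
  simp only [map_sub, map_mul, aeval_C, algebraMap_int_eq, Int.coe_castRingHom, hZ,
    sub_eq_zero] at hs
  by_cases hAs : aeval s A = 0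
  · have hUVs := congrArg (aeval s) hUV
    simp only [map_add, map_mul, aeval_C, algebraMap_int_eq, Int.coe_castRingHom, hAs, ← hs,
      zero_mul, mul_zero, add_zero] at hUVs
    exact hpr (((ZMod.intCast_zmod_eq_zero_iff_dvd _ _).1 hUVs.symm).mul_right _)
  · exact hz s hAs hs

theorem exists_int_map_eq_C_mul (F G : ℚ[X]) : ∃ c : ℤ, c ≠ 0 ∧ ∃ A B : ℤ[X],
    A.map (Int.castRingHom ℚ) = C (c : ℚ) * F ∧ B.map (Int.castRingHom ℚ) = C (c : ℚ) * G := by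
  obtain ⟨a, ha0, ha⟩ := IsLocalization.integerNormalization_spec (nonZeroDivisors ℤ) F
  obtain ⟨b, hb0, hb⟩ := IsLocalization.integerNormalization_spec (nonZeroDivisors ℤ) G
  rw [algebraMap_int_eq, zsmul_eq_mul, ← C_eq_intCast] at ha hb
  refine ⟨a * b, mul_ne_zero (nonZeroDivisors.ne_zero ha0) (nonZeroDivisors.ne_zero hb0),
    C b * IsLocalization.integerNormalization (nonZeroDivisors ℤ) F,
    C a * IsLocalization.integerNormalization (nonZeroDivisors ℤ) G, ?_, ?_⟩
  · rw [Polynomial.map_mul, ha, Polynomial.map_C, eq_intCast, Int.cast_mul, C_mul]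
    ring
  · rw [Polynomial.map_mul, hb, Polynomial.map_C, eq_intCast, Int.cast_mul, C_mul]
    ring

theorem exists_prime_forall_intCast_eq_eval_ne_zero {F G : ℚ[X]} (hcop : IsCoprime F G)
    (hF : 0 < F.natDegree) (hFG : F.natDegree < G.natDegree) :
    ∃ p, p.Prime ∧ ∃ z : ZMod p, ∀ Z : ℤ, (Z : ZMod p) = z →
      ∀ t : ℚ, (C (Z : ℚ) * F - G).eval t ≠ 0 := by
  obtain ⟨c, hc, A, B, hA, hB⟩ := exists_int_map_eq_C_mul F G
  have hcQ : (c : ℚ) ≠ 0 := Int.cast_ne_zero.2 hc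
  have hdeg (P : ℤ[X]) : P.natDegree = (P.map (Int.castRingHom ℚ)).natDegree :=
    (natDegree_map_eq_of_injective (RingHom.injective_int _) P).symm
  obtain ⟨p, hp, z, hz⟩ := exists_prime_forall_intCast_eq_aeval_ne_zero (A := A) (B := B)
    (by rwa [hA, hB, isCoprime_mul_unit_left (isUnit_C.2 hcQ.isUnit)])
    (by rwa [hdeg, hA, natDegree_C_mul hcQ])
    (by rwa [hdeg, hdeg B, hA, hB, natDegree_C_mul hcQ, natDegree_C_mul hcQ])
  refine ⟨p, hp, z, fun Z hZ t ht => hz Z hZ t ?_⟩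
  rw [aeval_def, algebraMap_int_eq, ← eval_map, Polynomial.map_sub, Polynomial.map_mul,
    Polynomial.map_C, hA, hB, eq_intCast]
  simp only [eval_sub, eval_mul, eval_C] at ht ⊢
  linear_combination (c : ℚ) * ht

section Recurrence

variable {y0 : ℚ} {h k : ℕ → ℚ[X]}

theorem coeff_zero_h (hh0 : h 0 = C (1 - y0)) (hh : ∀ m, h (m + 1) = h m - X * k m) (m : ℕ) :
    (h m).coeff 0 = 1 - y0 := by
  induction m with
  | zero => simp [hh0]
  | succ m ih => simp [hh, ih]

theorem isCoprime_h_k (hk0 : k 0 = 1) (hh : ∀ m, h (m + 1) = h m - X * k m)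
    (hk : ∀ m, k (m + 1) = h m + (1 - X) * k m) (m : ℕ) : IsCoprime (h m) (k m) := by
  induction m with
  | zero => rw [hk0]; exact isCoprime_one_right
  | succ m ih =>
    have hk' : k (m + 1) = k m + h (m + 1) * 1 := by rw [hk, hh]; ring
    have hh' : h (m + 1) = h m + k m * -X := by rw [hh]; ring
    have hhk : IsCoprime (h (m + 1)) (k m) := hh' ▸ ih.add_mul_left_left _
    rw [hk']
    exact hhk.add_mul_left_right _

theorem isCoprime_h_h_succ (hy0' : y0 ≠ 1) (hh0 : h 0 = C (1 - y0)) (hk0 : k 0 = 1)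
    (hh : ∀ m, h (m + 1) = h m - X * k m) (hk : ∀ m, k (m + 1) = h m + (1 - X) * k m) (m : ℕ) :
    IsCoprime (h m) (h (m + 1)) := by
  have hX : IsCoprime (h m) X := by
    refine (irreducible_X.coprime_iff_not_dvd.2 ?_).symm
    rw [X_dvd_iff, coeff_zero_h hh0 hh]
    exact sub_ne_zero.2 hy0'.symm
  have hh' : h (m + 1) = -(X * k m) + h m * 1 := by rw [hh]; ring
  rw [hh']
  exact (hX.mul_right (isCoprime_h_k hk0 hh hk m)).neg_right.add_mul_left_right _

theorem degree_h_le_and_degree_k_eq (hh0 : h 0 = C (1 - y0)) (hk0 : k 0 = 1)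
    (hh : ∀ m, h (m + 1) = h m - X * k m) (hk : ∀ m, k (m + 1) = h m + (1 - X) * k m) (m : ℕ) :
    (h m).degree ≤ m ∧ (k m).degree = m := by
  induction m with
  | zero => rw [hh0, hk0]; exact ⟨degree_C_le, degree_one⟩
  | succ m ih =>
    have hhs : (h (m + 1)).degree = ((m + 1 : ℕ) : WithBot ℕ) :=
      hh m ▸ degree_sub_X_mul_eq ih.1 ih.2
    have hk' : k (m + 1) = h (m + 1) + k m := by rw [hk, hh]; ring
    refine ⟨hhs.le, ?_⟩
    rw [hk', degree_add_eq_left_of_degree_lt, hhs]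
    rw [hhs, ih.2]
    exact_mod_cast m.lt_succ_self

theorem natDegree_h_succ (hh0 : h 0 = C (1 - y0)) (hk0 : k 0 = 1)
    (hh : ∀ m, h (m + 1) = h m - X * k m) (hk : ∀ m, k (m + 1) = h m + (1 - X) * k m) (m : ℕ) :
    (h (m + 1)).natDegree = m + 1 := by
  have hdeg := degree_h_le_and_degree_k_eq hh0 hk0 hh hk m
  exact natDegree_eq_of_degree_eq_some (hh m ▸ degree_sub_X_mul_eq hdeg.1 hdeg.2)

end Recurrence

theorem stmt_16
    (y0 : ℚ) (hy0 : y0 ≠ 0) (hy0' : y0 ≠ 1)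
    (h k : ℕ → Polynomial ℚ)
    (hh0 : h 0 = Polynomial.C (1 - y0)) (hk0 : k 0 = 1)
    (hh : ∀ m, h (m + 1) = h m - Polynomial.X * k m)
    (hk : ∀ m, k (m + 1) = h m + (1 - Polynomial.X) * k m) :
    ∀ m : ℕ, 1 ≤ m →
      {Z0 : ℚ | Z0 ≠ 0 ∧ (∀ n : ℤ, y0 ≠ Z0 ^ n) ∧
        ∀ t : ℚ, Polynomial.eval t
          (Polynomial.C (Z0 - y0) * h m + Polynomial.C y0 * Polynomial.X * k m) ≠ 0}.Infinite := by
  intro m hm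
  obtain ⟨m, rfl⟩ : ∃ n, m = n + 1 := ⟨m - 1, by omega⟩
  have hF := natDegree_h_succ hh0 hk0 hh hk m
  have hG : (C y0 * h (m + 1 + 1)).natDegree = m + 2 := by
    rw [natDegree_C_mul hy0, natDegree_h_succ hh0 hk0 hh hk]
  obtain ⟨p, hp, z, hz⟩ := exists_prime_forall_intCast_eq_eval_ne_zero
    ((isCoprime_mul_unit_left_right (isUnit_C.2 hy0.isUnit) _ _).2
      (isCoprime_h_h_succ hy0' hh0 hk0 hh hk (m + 1))) (by omega) (by omega)
  have : NeZero p := ⟨hp.ne_zero⟩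
  refine Set.infinite_of_not_bddAbove (not_bddAbove_iff.2 fun R => ?_)
  obtain ⟨Z, hZz, hRZ⟩ := ZMod.exists_intCast_eq_gt z (max R (|y0| + |y0|⁻¹))
  have hZ : |y0| + |y0|⁻¹ < |(Z : ℚ)| :=
    ((le_max_right _ _).trans_lt hRZ).trans_le (le_abs_self _)
  have hy := abs_pos.2 hy0
  have hy' := inv_pos.2 hy
  refine ⟨Z, ⟨abs_pos.1 (by linarith), fun n =>
    (zpow_ne_of_abs_lt hy0 hy0' (by linarith) (by linarith) n).symm, fun t => ?_⟩,
    (le_max_left _ _).trans_lt hRZ⟩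
  have hpoly : C ((Z : ℚ) - y0) * h (m + 1) + C y0 * X * k (m + 1)
      = C (Z : ℚ) * h (m + 1) - C y0 * h (m + 1 + 1) := by
    rw [hh (m + 1), C_sub]
    ring
  rw [hpoly]
  exact hz Z hZz t
end

section
/- In the commutative ring $\mathbb{Z}[\mu^{\pm}, U^{\pm}][X, Y]$, set $\bar M = \mu^{-1}(1-\mu) + (\mu^{-1} - \mu U^{-1})XY - (XY)^2$, $F = -\mu Y + (-\mu^{-1} + 1 - XY) + \bar M (1 - \mu + \mu XY)$, and $G = (U - \mu) + (-\mu^{-1} + 1 - \mu U^{-1} - XY)X + \mu \bar M X$. Then $(U - \mu) F + \mu Y \, G = P(XY)$, where $P(T) = -(1-\mu)(U-\mu) + (-2 + 2\mu + \mu^2 + (\mu^{-1} - 1 - \mu)U - \mu^3 U^{-1}) T + (-2\mu^2 + \mu U) T^2 - \mu U T^3$. -/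
/-- Identity in `R[X,Y]` where `R` is a commutative ring containing invertible elements
`μ, U` (the universal case being the Laurent polynomial ring `ℤ[μ^±, U^±]`). -/
theorem stmt_19 {R : Type*} [CommRing R] (mu u : Rˣ)
    (Xv Yv : MvPolynomial (Fin 2) R)
    (hX : Xv = MvPolynomial.X 0) (hY : Yv = MvPolynomial.X 1)
    (Mbar F G : MvPolynomial (Fin 2) R)
    (hM : Mbar = MvPolynomial.C (((mu⁻¹ : Rˣ) : R) * (1 - (mu : R)))
        + MvPolynomial.C (((mu⁻¹ : Rˣ) : R) - (mu : R) * ((u⁻¹ : Rˣ) : R)) * (Xv * Yv)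
        - (Xv * Yv) ^ 2)
    (hF : F = -MvPolynomial.C (mu : R) * Yv
        + (MvPolynomial.C (-((mu⁻¹ : Rˣ) : R) + 1) - Xv * Yv)
        + Mbar * (MvPolynomial.C (1 - (mu : R)) + MvPolynomial.C (mu : R) * Xv * Yv))
    (hG : G = MvPolynomial.C ((u : R) - (mu : R))
        + (MvPolynomial.C (-((mu⁻¹ : Rˣ) : R) + 1 - (mu : R) * ((u⁻¹ : Rˣ) : R)) - Xv * Yv) * Xv
        + MvPolynomial.C (mu : R) * Mbar * Xv)
    (P : Polynomial R)
    (hP : P = Polynomial.C (-(1 - (mu : R)) * ((u : R) - (mu : R)))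
        + Polynomial.C (-2 + 2 * (mu : R) + (mu : R) ^ 2
            + (((mu⁻¹ : Rˣ) : R) - 1 - (mu : R)) * (u : R)
            - (mu : R) ^ 3 * ((u⁻¹ : Rˣ) : R)) * Polynomial.X
        + Polynomial.C (-2 * (mu : R) ^ 2 + (mu : R) * (u : R)) * Polynomial.X ^ 2
        - Polynomial.C ((mu : R) * (u : R)) * Polynomial.X ^ 3) :
    MvPolynomial.C ((u : R) - (mu : R)) * F + MvPolynomial.C (mu : R) * Yv * G
      = Polynomial.aeval (Xv * Yv) P := by
  subst hX hY hM hF hG hP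
  have h1 : (MvPolynomial.C ((mu⁻¹ : Rˣ) : R) : MvPolynomial (Fin 2) R)
      * MvPolynomial.C ((mu : Rˣ) : R) = 1 := by
    rw [← map_mul, ← Units.val_mul, inv_mul_cancel mu, Units.val_one, map_one]
  have h2 : (MvPolynomial.C ((u⁻¹ : Rˣ) : R) : MvPolynomial (Fin 2) R)
      * MvPolynomial.C ((u : Rˣ) : R) = 1 := by
    rw [← map_mul, ← Units.val_mul, inv_mul_cancel u, Units.val_one, map_one]
  simp only [map_add, map_sub, map_mul, map_pow, map_neg, map_one, map_ofNat,
    Polynomial.aeval_C, Polynomial.aeval_X, MvPolynomial.algebraMap_eq]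
  set a : MvPolynomial (Fin 2) R := MvPolynomial.C ((mu⁻¹ : Rˣ) : R)
  set b : MvPolynomial (Fin 2) R := MvPolynomial.C ((u⁻¹ : Rˣ) : R)
  set m : MvPolynomial (Fin 2) R := MvPolynomial.C ((mu : Rˣ) : R)
  set n : MvPolynomial (Fin 2) R := MvPolynomial.C ((u : Rˣ) : R)
  set X : MvPolynomial (Fin 2) R := MvPolynomial.X 0
  set Y : MvPolynomial (Fin 2) R := MvPolynomial.X 1
  linear_combination (-2*X*Y - 2*n + n*X^2*Y^2 + 2*m + m*X*Y + m*n - m*n*X*Y - m^2) * h1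
    + (-m*X*Y + m^2*X*Y - m^2*X^2*Y^2) * h2
end
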